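/- Let A be a Hermitian n×n complex matrix. Define v(A) as the positive square root of γ(-ad A) restricted to Hermitian matrices, where γ(B) = Σ_{m≥0} B^m/(m+1)!. Then γ(-ad A), as an operator on the space of Hermitian matrices equipped with the Hilbert–Schmidt inner product, is self-adjoint and positive semidefinite, so v(A) is well-defined. -/

import Mathlib

/-!
Diagonalize `A = U D U*` with `D` real diagonal. Conjugation by the unitary `U` is a
trace-preserving `*`-automorphism, so it preserves the Hilbert–Schmidt form `tr (Xᴴ Y)`, and
it intertwines `γ(-ad A)` with `γ(-ad D)`. Since `-ad D` multiplies the `(i, j)` entry by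
`dⱼ - dᵢ`, `γ(-ad D)` is the Hadamard (Schur) multiplier by the matrix `γ(dⱼ - dᵢ)`, whose
entries are real and nonnegative because `x γ(x) = eˣ - 1`. A Hadamard multiplier with real
entries is self-adjoint for the Hilbert–Schmidt form, and one with nonnegative entries is
positive.
-/

open Matrix
/-- `γ(-ad A)` applied to `Y`, where `ad A (Y) = A*Y - Y*A`,
`γ(B) = ∑_{m ≥ 0} B^m / (m+1)!`. -/
noncomputable def gammaNegAd {n : ℕ} (A Y : Matrix (Fin n) (Fin n) ℂ) :
    Matrix (Fin n) (Fin n) ℂ :=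
  ∑' m : ℕ, (((m + 1).factorial : ℂ))⁻¹ • ((fun Z => Z * A - A * Z)^[m] Y)

open ComplexOrder Unitary

noncomputable def gammaSeries (x : ℝ) : ℝ := ∑' m : ℕ, ((m + 1).factorial : ℝ)⁻¹ * x ^ m

lemma hasSum_gammaSeries (x : ℝ) :
    HasSum (fun m : ℕ => ((m + 1).factorial : ℝ)⁻¹ * x ^ m) (gammaSeries x) := by
  refine (Summable.of_norm_bounded (Real.summable_pow_div_factorial |x|) fun m => ?_).hasSum
  rw [norm_mul, norm_pow, norm_inv, Real.norm_natCast, Real.norm_eq_abs, div_eq_inv_mul]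
  gcongr
  exact Nat.le_succ m

lemma mul_gammaSeries (x : ℝ) : x * gammaSeries x = Real.exp x - 1 := by
  have hexp := (hasSum_nat_add_iff' 1).mpr (NormedSpace.expSeries_div_hasSum_exp x)
  rw [← Real.exp_eq_exp_ℝ] at hexp
  have hterm : (fun m : ℕ => x * (((m + 1).factorial : ℝ)⁻¹ * x ^ m))
      = fun m => x ^ (m + 1) / (m + 1).factorial := by
    ext m
    rw [pow_succ']
    field_simp
  refine ((hasSum_gammaSeries x).mul_left x).unique ?_
  simpa [hterm] using hexp

lemma gammaSeries_nonneg (x : ℝ) : 0 ≤ gammaSeries x := by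
  rcases le_or_gt 0 x with hx | hx
  · exact tsum_nonneg fun m => by positivity
  · by_contra! h
    nlinarith [mul_gammaSeries x, Real.exp_lt_one_iff.mpr hx, mul_pos_of_neg_of_neg hx h]

lemma iterate_mul_diagonal_sub_diagonal_mul_apply {ι R : Type*} [Fintype ι] [DecidableEq ι]
    [CommRing R] (d : ι → R) (W : Matrix ι ι R) (m : ℕ) (i j : ι) :
    ((fun Z => Z * diagonal d - diagonal d * Z)^[m] W) i j = (d j - d i) ^ m * W i j := by
  induction m generalizing W with
  | zero => simp
  | succ m ih =>
    rw [Function.iterate_succ_apply, ih, Matrix.sub_apply, mul_diagonal, diagonal_mul]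
    ring

lemma gammaNegAd_diagonal {n : ℕ} (d : Fin n → ℝ) (W : Matrix (Fin n) (Fin n) ℂ) :
    gammaNegAd (diagonal (RCLike.ofReal ∘ d)) W
      = (of fun i j => (gammaSeries (d j - d i) : ℂ)) ⊙ W := by
  refine HasSum.tsum_eq (Pi.hasSum.mpr fun i => Pi.hasSum.mpr fun j => ?_)
  have h := ((hasSum_gammaSeries (d j - d i)).mapL Complex.ofRealCLM).mul_right (W i j)
  simp only [Matrix.smul_apply, iterate_mul_diagonal_sub_diagonal_mul_apply]
  simpa [mul_assoc] using h

lemma gammaNegAd_map {n : ℕ} (φ : Matrix (Fin n) (Fin n) ℂ ≃ₐ[ℂ] Matrix (Fin n) (Fin n) ℂ)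
    (A Y : Matrix (Fin n) (Fin n) ℂ) :
    gammaNegAd (φ A) (φ Y) = φ (gammaNegAd A Y) := by
  have hφ : Function.Semiconj φ (fun Z => Z * A - A * Z) (fun Z => Z * φ A - φ A * Z) :=
    fun Z => by simp only [map_sub, map_mul]
  have h := φ.toLinearEquiv.toContinuousLinearEquiv.map_tsum
    (L := SummationFilter.unconditional ℕ)
    (f := fun m : ℕ => (((m + 1).factorial : ℂ))⁻¹ • ((fun Z => Z * A - A * Z)^[m] Y))
  simp only [LinearEquiv.coe_toContinuousLinearEquiv', AlgEquiv.toLinearEquiv_apply,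
    map_smul] at h
  simp only [gammaNegAd, h, (hφ.iterate_right _).eq]

lemma trace_conjTranspose_mul_conjStarAlgAut {n R : Type*} [Fintype n] [DecidableEq n]
    [CommRing R] [StarRing R] (u : unitary (Matrix n n R)) (P Q : Matrix n n R) :
    ((conjStarAlgAut R _ u P)ᴴ * conjStarAlgAut R _ u Q).trace = (Pᴴ * Q).trace := by
  rw [← star_eq_conjTranspose, ← map_star, ← map_mul, conjStarAlgAut_apply, trace_mul_cycle,
    coe_star_mul_self, one_mul, star_eq_conjTranspose]

lemma trace_hadamard_mul {m n α : Type*} [Fintype m] [Fintype n] [NonUnitalSemiring α]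
    (A B : Matrix m n α) (C : Matrix n m α) :
    ((A ⊙ B) * C).trace = (A * (Bᵀ ⊙ C)).trace := by
  simp [trace, mul_apply, hadamard_apply, mul_assoc]

lemma trace_conjTranspose_hadamard_mul {n α : Type*} [Fintype n] [NonUnitalSemiring α]
    [StarRing α] {G : Matrix n n α} (hG : G.map star = G) (X Y : Matrix n n α) :
    ((G ⊙ X)ᴴ * Y).trace = (Xᴴ * (G ⊙ Y)).trace := by
  rw [conjTranspose_hadamard, trace_hadamard_mul, show Gᴴᵀ = G from hG]

lemma trace_conjTranspose_mul_hadamard_self_nonneg {n α : Type*} [Fintype n]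
    [NonUnitalSemiring α] [PartialOrder α] [StarRing α] [StarOrderedRing α]
    {G : Matrix n n α} (hG : ∀ i j, 0 ≤ G i j) (X : Matrix n n α) :
    0 ≤ (Xᴴ * (G ⊙ X)).trace := by
  simp only [trace, diag, mul_apply, conjTranspose_apply, hadamard_apply, ← mul_assoc]
  exact Finset.sum_nonneg fun i _ => Finset.sum_nonneg fun j _ =>
    star_left_conjugate_nonneg (hG j i) _

theorem stmt8 {n : ℕ} (A : Matrix (Fin n) (Fin n) ℂ) (hA : A.IsHermitian) :
    (∀ X Y : Matrix (Fin n) (Fin n) ℂ,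
      ((gammaNegAd A X)ᴴ * Y).trace = (Xᴴ * gammaNegAd A Y).trace) ∧
    (∀ X : Matrix (Fin n) (Fin n) ℂ,
      0 ≤ ((Xᴴ * gammaNegAd A X).trace).re ∧ ((Xᴴ * gammaNegAd A X).trace).im = 0) := by
  set φ := conjStarAlgAut ℂ _ hA.eigenvectorUnitary
  set G : Matrix (Fin n) (Fin n) ℂ :=
    of fun i j => (gammaSeries (hA.eigenvalues j - hA.eigenvalues i) : ℂ)
  have hγ : ∀ X, gammaNegAd A (φ X) = φ (G ⊙ X) := fun X => by
    conv_lhs => rw [hA.spectral_theorem]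
    exact (gammaNegAd_map φ.toAlgEquiv _ X).trans (congrArg φ (gammaNegAd_diagonal _ X))
  have hG : G.map star = G := by ext; simp [G]
  have hG₀ : ∀ i j, 0 ≤ G i j := fun i j => Complex.zero_le_real.mpr (gammaSeries_nonneg _)
  refine ⟨fun X Y => ?_, fun X => ?_⟩
  · obtain ⟨X, rfl⟩ : ∃ X', φ X' = X := φ.surjective X
    obtain ⟨Y, rfl⟩ : ∃ Y', φ Y' = Y := φ.surjective Y
    rw [hγ, hγ, trace_conjTranspose_mul_conjStarAlgAut, trace_conjTranspose_mul_conjStarAlgAut,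
      trace_conjTranspose_hadamard_mul hG]
  · obtain ⟨X, rfl⟩ : ∃ X', φ X' = X := φ.surjective X
    rw [hγ, trace_conjTranspose_mul_conjStarAlgAut]
    obtain ⟨hre, him⟩ :=
      Complex.nonneg_iff.mp (trace_conjTranspose_mul_hadamard_self_nonneg hG₀ X)
    exact ⟨hre, him.symm⟩
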